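/- arXiv:1710.01883 — 4 statements merged into one kernel-verified Lean document; each statement's English description precedes it below -/
import Mathlib

section
/- Let G be a k-connected finite simple graph, let S be a separating set of G with |S| = k, and let F be a fragment of G to S. Then the completion G[S] with the vertices of the complementary fragment F̄ deleted, i.e. the graph G[S] − V(F̄), is k-connected. Furthermore, if F is an end of G with |F| ≥ 2, then G[S] − V(F̄) is (k+1)-connected. -/
/-- A graph `G` is `k`-connected if it has at least `k+1` vertices and removing
any set of fewer than `k` vertices leaves a connected graph. -/
def IsKConnected {V : Type*} [Finite V] (G : SimpleGraph V) (k : ℕ) : Prop :=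
  k + 1 ≤ Nat.card V ∧ ∀ X : Set V, X.ncard < k → (G.induce Xᶜ).Connected

/-- `S` is a separating set of `G`: the graph `G − S` is disconnected. -/
def Separates {V : Type*} (G : SimpleGraph V) (S : Set V) : Prop :=
  ¬ (G.induce Sᶜ).Preconnected

/-- `F` is a fragment of `G` to the separating set `S`: a nonempty union of
components of `G − S` (i.e. a nonempty subset of `Sᶜ` closed under adjacency
outside `S`) whose complementary fragment `(S ∪ F)ᶜ` is also nonempty. -/
def IsFragment {V : Type*} (G : SimpleGraph V) (S F : Set V) : Prop :=
  F.Nonempty ∧ F ⊆ Sᶜ ∧ ((S ∪ F)ᶜ).Nonempty ∧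
    ∀ x ∈ F, ∀ y ∈ Sᶜ, G.Adj x y → y ∈ F

/-- `F` is a fragment of the `k`-connected graph `G`, i.e. a fragment to some
minimum separating set (a separating set of cardinality `k`). -/
def IsFragmentOf {V : Type*} [Finite V] (G : SimpleGraph V) (k : ℕ) (F : Set V) : Prop :=
  ∃ S : Set V, S.ncard = k ∧ Separates G S ∧ IsFragment G S F

/-- An end of `G` is a fragment of `G` not containing another fragment of `G`. -/
def IsEnd {V : Type*} [Finite V] (G : SimpleGraph V) (k : ℕ) (F : Set V) : Prop :=
  IsFragmentOf G k F ∧ ∀ F' : Set V, IsFragmentOf G k F' → F' ⊆ F → F' = F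

/-- The completion `G[S]` of `S` in `G`: add all edges between vertices of `S`. -/
def completion {V : Type*} (G : SimpleGraph V) (S : Set V) : SimpleGraph V :=
  G ⊔ SimpleGraph.fromRel (fun x y => x ∈ S ∧ y ∈ S)

section Aux

open SimpleGraph

variable {V : Type*}

lemma completion_adj (G : SimpleGraph V) (S : Set V) {x y : V} :
    (completion G S).Adj x y ↔ G.Adj x y ∨ (x ≠ y ∧ x ∈ S ∧ y ∈ S) := by
  simp only [completion, sup_adj, fromRel_adj]
  constructor
  · rintro (h | ⟨hne, ⟨h1, h2⟩ | ⟨h1, h2⟩⟩)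
    · exact Or.inl h
    · exact Or.inr ⟨hne, h1, h2⟩
    · exact Or.inr ⟨hne, h2, h1⟩
  · rintro (h | ⟨hne, h1, h2⟩)
    · exact Or.inl h
    · exact Or.inr ⟨hne, Or.inl ⟨h1, h2⟩⟩

lemma le_completion (G : SimpleGraph V) (S : Set V) : G ≤ completion G S := le_sup_left

/-- Iso between a double induced subgraph and the induced subgraph on the image. -/
def induceInduceIso (G : SimpleGraph V) (A : Set V) (B : Set ↥A) :
    (G.induce A).induce B ≃g G.induce (Subtype.val '' B) where
  toEquiv :=
    { toFun := fun x => ⟨x.1.1, x.1, x.2, rfl⟩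
      invFun := fun y => ⟨⟨y.1, by obtain ⟨x, hx, he⟩ := y.2; exact he ▸ x.2⟩, by
        obtain ⟨x, hx, he⟩ := y.2
        have : (⟨y.1, by exact he ▸ x.2⟩ : ↥A) = x := Subtype.ext he.symm
        rw [this]; exact hx⟩
      left_inv := fun x => Subtype.ext (Subtype.ext rfl)
      right_inv := fun y => Subtype.ext rfl }
  map_rel_iff' := Iff.rfl

/-- A set closed under adjacency absorbs walks. -/
lemma walk_closed (G : SimpleGraph V) (W D : Set V)
    (hD : ∀ x ∈ D, ∀ y ∈ W, G.Adj x y → y ∈ D) :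
    ∀ {x y : ↥W}, (G.induce W).Walk x y → (x : V) ∈ D → (y : V) ∈ D
  | _, _, SimpleGraph.Walk.nil, hx => hx
  | _, _, SimpleGraph.Walk.cons h p, hx =>
      walk_closed G W D hD p (hD _ hx _ (Subtype.prop _) h)

/-- Walk surgery : a walk in `G − Y` between vertices of `S ∪ F` can be turned into
a walk in the completion restricted to `S ∪ F`. -/
lemma surgery (G : SimpleGraph V) (S F : Set V)
    (hclo : ∀ x ∈ F, ∀ y ∈ Sᶜ, G.Adj x y → y ∈ F) (W : Set V) :
    ∀ {x y : ↥W} (_ : (G.induce W).Walk x y) (hy : (y : V) ∈ S ∪ F),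
    ∃ w : ↥(W ∩ (S ∪ F)), ((x : V) ∈ S ∪ F → (w : V) = (x : V)) ∧
      ((x : V) ∉ S ∪ F → (w : V) ∈ S) ∧
      ((completion G S).induce (W ∩ (S ∪ F))).Reachable w ⟨(y : V), ⟨y.2, hy⟩⟩
  | x, _, SimpleGraph.Walk.nil, hy =>
      ⟨⟨(x : V), ⟨x.2, hy⟩⟩, fun _ => rfl, fun h => absurd hy h, SimpleGraph.Reachable.refl _⟩
  | x, y, SimpleGraph.Walk.cons (v := z) h p, hy => by
      obtain ⟨w', hw1, hw2, hw3⟩ := surgery G S F hclo W p hy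
      have hGadj : G.Adj (x : V) (z : V) := h
      by_cases hz : (z : V) ∈ S ∪ F
      · by_cases hx : (x : V) ∈ S ∪ F
        · refine ⟨⟨(x : V), ⟨x.2, hx⟩⟩, fun _ => rfl, fun hc => absurd hx hc, ?_⟩
          have hadj : ((completion G S).induce (W ∩ (S ∪ F))).Adj
              ⟨(x : V), ⟨x.2, hx⟩⟩ ⟨(z : V), ⟨z.2, hz⟩⟩ :=
            (completion_adj G S).mpr (Or.inl hGadj)
          have hw'' : w' = ⟨(z : V), ⟨z.2, hz⟩⟩ := Subtype.ext (hw1 hz)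
          exact hadj.reachable.trans (hw'' ▸ hw3)
        · have hzS : (z : V) ∈ S := by
            rcases hz with hzS | hzF
            · exact hzS
            · exact absurd (Or.inr (hclo _ hzF _ (fun hxS => hx (Or.inl hxS)) hGadj.symm)) hx
          refine ⟨w', fun hc => absurd hc hx, fun _ => ?_, hw3⟩
          rw [hw1 hz]; exact hzS
      · have hw2' : (w' : V) ∈ S := hw2 hz
        by_cases hx : (x : V) ∈ S ∪ F
        · have hxS : (x : V) ∈ S := by
            rcases hx with hxS | hxF
            · exact hxS
            · exact absurd (Or.inr (hclo _ hxF _ (fun hzS => hz (Or.inl hzS)) hGadj)) hz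
          refine ⟨⟨(x : V), ⟨x.2, hx⟩⟩, fun _ => rfl, fun hc => absurd hx hc, ?_⟩
          by_cases heq : (x : V) = (w' : V)
          · have hw'' : w' = ⟨(x : V), ⟨x.2, hx⟩⟩ := Subtype.ext heq.symm
            exact hw'' ▸ hw3
          · have hadj : ((completion G S).induce (W ∩ (S ∪ F))).Adj
                ⟨(x : V), ⟨x.2, hx⟩⟩ w' :=
              (completion_adj G S).mpr (Or.inr ⟨heq, hxS, hw2'⟩)
            exact hadj.reachable.trans hw3
        · exact ⟨w', fun hc => absurd hc hx, fun _ => hw2', hw3⟩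

end Aux

section Core

open SimpleGraph

variable {V : Type*} [Finite V]

lemma core1 (G : SimpleGraph V) (k : ℕ) (hG : IsKConnected G k)
    (S F : Set V) (hScard : S.ncard = k) (hF : IsFragment G S F)
    (Y : Set V) (hY : Y.ncard < k) :
    ((completion G S).induce (Yᶜ ∩ (S ∪ F))).Connected := by
  obtain ⟨hFne, hFS, hFbar, hclo⟩ := hF
  have hcard : k + 1 ≤ (S ∪ F).ncard := by
    have hdisj : Disjoint S F := Set.disjoint_left.mpr fun a ha haF => (hFS haF) ha
    rw [Set.ncard_union_eq hdisj (Set.toFinite S) (Set.toFinite F), hScard]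
    have : 0 < F.ncard := (Set.ncard_pos (Set.toFinite F)).mpr hFne
    omega
  have hne : (Yᶜ ∩ (S ∪ F)).Nonempty := by
    by_contra hcon
    rw [Set.not_nonempty_iff_eq_empty] at hcon
    have hsub : S ∪ F ⊆ Y := by
      intro a ha
      by_contra haY
      exact Set.eq_empty_iff_forall_notMem.mp hcon a ⟨haY, ha⟩
    have := Set.ncard_le_ncard hsub (Set.toFinite Y)
    omega
  rw [SimpleGraph.connected_iff]
  constructor
  · intro u v
    have hconn := (hG.2 Y hY).preconnected ⟨(u : V), u.2.1⟩ ⟨(v : V), v.2.1⟩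
    refine hconn.elim fun p => ?_
    obtain ⟨w, hw1, _, hw3⟩ := surgery G S F hclo Yᶜ p v.2.2
    have h1 : w = u := Subtype.ext (hw1 u.2.2)
    have h2 : (⟨(v : V), ⟨v.2.1, v.2.2⟩⟩ : ↥(Yᶜ ∩ (S ∪ F))) = v := Subtype.ext rfl
    rw [h1, h2] at hw3
    exact hw3
  · exact ⟨⟨hne.choose, hne.choose_spec⟩⟩

lemma core2 (G : SimpleGraph V) (k : ℕ) (hG : IsKConnected G k)
    (S F : Set V) (hScard : S.ncard = k) (hSsep : Separates G S)
    (hF : IsFragment G S F) (hEnd : IsEnd G k F)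
    (Y : Set V) (hYsub : Y ⊆ S ∪ F) (hY : Y.ncard = k) :
    ((completion G S).induce (Yᶜ ∩ (S ∪ F))).Connected := by
  obtain ⟨hFne, hFS, hFbar, hclo⟩ := hF
  by_cases hYS : Y = S
  · subst hYS
    have hAeq : Yᶜ ∩ (Y ∪ F) = F := by
      ext a
      constructor
      · rintro ⟨h1, h2 | h2⟩
        · exact absurd h2 h1
        · exact h2
      · intro ha
        exact ⟨hFS ha, Or.inr ha⟩
    rw [hAeq]
    -- F induces a connected subgraph of G, hence of the completion.
    obtain ⟨c, hc⟩ := hFne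
    set C : Set V := {v | ∃ h : v ∈ F, (G.induce F).Reachable ⟨v, h⟩ ⟨c, hc⟩} with hCdef
    have hCF : C ⊆ F := fun v hv => hv.1
    have hCfrag : IsFragment G Y C := by
      refine ⟨⟨c, hc, SimpleGraph.Reachable.refl _⟩, fun v hv => hFS (hCF hv), ?_, ?_⟩
      · obtain ⟨b, hb⟩ := hFbar
        exact ⟨b, fun hmem => hb (by
          rcases hmem with h | h
          · exact Or.inl h
          · exact Or.inr (hCF h))⟩
      · rintro x ⟨hxF, hxR⟩ y hyS hadj
        have hyF : y ∈ F := hclo x hxF y hyS hadj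
        refine ⟨hyF, ?_⟩
        have : (G.induce F).Adj ⟨y, hyF⟩ ⟨x, hxF⟩ := hadj.symm
        exact this.reachable.trans hxR
    have hCeq : C = F := hEnd.2 C ⟨Y, hScard, hSsep, hCfrag⟩ hCF
    have hconnF : (G.induce F).Connected := by
      rw [SimpleGraph.connected_iff]
      refine ⟨fun u v => ?_, ⟨⟨c, hc⟩⟩⟩
      have hu : (u : V) ∈ C := by rw [hCeq]; exact u.2
      have hv : (v : V) ∈ C := by rw [hCeq]; exact v.2
      obtain ⟨hu1, hu2⟩ := hu
      obtain ⟨hv1, hv2⟩ := hv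
      have e1 : (⟨(u : V), hu1⟩ : ↥F) = u := Subtype.ext rfl
      have e2 : (⟨(v : V), hv1⟩ : ↥F) = v := Subtype.ext rfl
      exact (e1 ▸ hu2).trans (e2 ▸ hv2).symm
    exact hconnF.mono (fun a b hab => (completion_adj G Y).mpr (Or.inl hab))
  · -- Y ≠ S : there is some s ∈ S \ Y.
    have hsEx : ∃ s ∈ S, s ∉ Y := by
      by_contra hcon
      push_neg at hcon
      have hsub : S ⊆ Y := hcon
      exact hYS (Set.eq_of_subset_of_ncard_le hsub (by omega) (Set.toFinite Y)).symm
    obtain ⟨s, hsS, hsY⟩ := hsEx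
    set A : Set V := Yᶜ ∩ (S ∪ F) with hAdef
    have hsA : s ∈ A := ⟨hsY, Or.inl hsS⟩
    set C : Set V := {v | ∃ h : v ∈ A, ((completion G S).induce A).Reachable ⟨v, h⟩ ⟨s, hsA⟩}
      with hCdef
    have hSYC : ∀ t ∈ S, t ∉ Y → t ∈ C := by
      intro t htS htY
      have htA : t ∈ A := ⟨htY, Or.inl htS⟩
      by_cases hts : t = s
      · subst hts; exact ⟨htA, SimpleGraph.Reachable.refl _⟩
      · have hadj : ((completion G S).induce A).Adj ⟨t, htA⟩ ⟨s, hsA⟩ :=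
          (completion_adj G S).mpr (Or.inr ⟨hts, htS, hsS⟩)
        exact ⟨htA, hadj.reachable⟩
    set D : Set V := A \ C with hDdef
    have hDF : D ⊆ F := by
      rintro d ⟨⟨hdY, hdSF⟩, hdC⟩
      rcases hdSF with hdS | hdF
      · exact absurd (hSYC d hdS hdY) hdC
      · exact hdF
    have hDclo : ∀ x ∈ D, ∀ y ∈ Yᶜ, G.Adj x y → y ∈ D := by
      intro x hxD y hyY hadj
      have hxF : x ∈ F := hDF hxD
      have hySF : y ∈ S ∪ F := by
        by_cases hyS : y ∈ S
        · exact Or.inl hyS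
        · exact Or.inr (hclo x hxF y hyS hadj)
      have hyA : y ∈ A := ⟨hyY, hySF⟩
      by_cases hyC : y ∈ C
      · exfalso
        obtain ⟨_, hyR⟩ := hyC
        have hadj' : ((completion G S).induce A).Adj ⟨x, hxD.1⟩ ⟨y, hyA⟩ :=
          (completion_adj G S).mpr (Or.inl hadj)
        exact hxD.2 ⟨hxD.1, hadj'.reachable.trans hyR⟩
      · exact ⟨hyA, hyC⟩
    by_cases hD : D.Nonempty
    · exfalso
      obtain ⟨d, hdD⟩ := hD
      have hYsep : Separates G Y := by
        intro hpre
        have hr := hpre ⟨d, hdD.1.1⟩ ⟨s, hsY⟩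
        refine hr.elim fun p => ?_
        have : s ∈ D := walk_closed G Yᶜ D hDclo p hdD
        exact (hFS (hDF this)) hsS
      have hDfrag : IsFragment G Y D := by
        refine ⟨⟨d, hdD⟩, fun v hv => hv.1.1, ⟨s, ?_⟩, hDclo⟩
        rintro (h | h)
        · exact hsY h
        · exact (hFS (hDF h)) hsS
      have hDeq : D = F := hEnd.2 D ⟨Y, hY, hYsep, hDfrag⟩ hDF
      -- then Y ∩ F = ∅, so Y ⊆ S, so Y = S, contradiction
      have hYS' : Y ⊆ S := by
        intro a haY
        rcases hYsub haY with h | h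
        · exact h
        · have haD : a ∈ D := by rw [hDeq]; exact h
          exact absurd haY haD.1.1
      exact hYS (Set.eq_of_subset_of_ncard_le hYS' (by omega) (Set.toFinite S))
    · have hAC : ∀ a ∈ A, a ∈ C := by
        intro a haA
        by_contra haC
        exact hD ⟨a, haA, haC⟩
      rw [SimpleGraph.connected_iff]
      refine ⟨fun u v => ?_, ⟨⟨s, hsA⟩⟩⟩
      obtain ⟨hu1, hu2⟩ := hAC (u : V) u.2
      obtain ⟨hv1, hv2⟩ := hAC (v : V) v.2
      have e1 : (⟨(u : V), hu1⟩ : ↥A) = u := Subtype.ext rfl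
      have e2 : (⟨(v : V), hv1⟩ : ↥A) = v := Subtype.ext rfl
      exact (e1 ▸ hu2).trans (e2 ▸ hv2).symm

end Core

/-- Lemma 3.1 (Hamidoune): if `G` is `k`-connected, `S` is a separating set of `G`
with `|S| = k` and `F` is a fragment of `G` to `S`, then `G[S] − V(F̄)`
(the completion induced on `S ∪ F`) is `k`-connected; moreover if `F` is an end
of `G` with `|F| ≥ 2`, then `G[S] − V(F̄)` is `(k+1)`-connected. -/
theorem nonseparating_fragment_completion {V : Type*} [Finite V]
    (G : SimpleGraph V) (k : ℕ) (hG : IsKConnected G k)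
    (S F : Set V) (hScard : S.ncard = k) (hSsep : Separates G S)
    (hF : IsFragment G S F) :
    IsKConnected ((completion G S).induce (S ∪ F)) k ∧
      (IsEnd G k F → 2 ≤ F.ncard →
        IsKConnected ((completion G S).induce (S ∪ F)) (k + 1)) := by
  have hdisj : Disjoint S F := Set.disjoint_left.mpr fun a ha haF => (hF.2.1 haF) ha
  have hSFcard : (S ∪ F).ncard = k + F.ncard := by
    rw [Set.ncard_union_eq hdisj (Set.toFinite S) (Set.toFinite F), hScard]
  have hFpos : 0 < F.ncard := (Set.ncard_pos (Set.toFinite F)).mpr hF.1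
  have hNatCard : Nat.card ↥(S ∪ F) = (S ∪ F).ncard := Nat.card_coe_set_eq (S ∪ F)
  have himg : ∀ X : Set ↥(S ∪ F),
      Subtype.val '' Xᶜ = (Subtype.val '' X)ᶜ ∩ (S ∪ F) := by
    intro X
    ext a
    constructor
    · rintro ⟨b, hb, rfl⟩
      refine ⟨?_, b.2⟩
      rintro ⟨b', hb', he⟩
      exact hb (Subtype.ext he ▸ hb')
    · rintro ⟨haX, haSF⟩
      exact ⟨⟨a, haSF⟩, fun hmem => haX ⟨⟨a, haSF⟩, hmem, rfl⟩, rfl⟩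
  have key : ∀ X : Set ↥(S ∪ F), ((Subtype.val '' X)ᶜ ∩ (S ∪ F) =
      Subtype.val '' Xᶜ) → True := fun _ _ => trivial
  constructor
  · constructor
    · rw [hNatCard, hSFcard]; omega
    · intro X hX
      rw [(induceInduceIso (completion G S) (S ∪ F) Xᶜ).connected_iff, himg X]
      refine core1 G k hG S F hScard hF (Subtype.val '' X) ?_
      rwa [Set.ncard_image_of_injective _ Subtype.val_injective]
  · intro hEnd hF2
    constructor
    · rw [hNatCard, hSFcard]; omega
    · intro X hX
      rw [(induceInduceIso (completion G S) (S ∪ F) Xᶜ).connected_iff, himg X]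
      have hXcard : (Subtype.val '' X).ncard = X.ncard :=
        Set.ncard_image_of_injective _ Subtype.val_injective
      rcases lt_or_eq_of_le (Nat.lt_succ_iff.mp hX) with hlt | heq
      · exact core1 G k hG S F hScard hF (Subtype.val '' X) (by omega)
      · refine core2 G k hG S F hScard hSsep hF hEnd (Subtype.val '' X) ?_ (by omega)
        rintro a ⟨b, _, rfl⟩
        exact b.2
end

section
/- Let D be a finite digraph, let m ≥ 4 be an integer, and let T₁ be an out-double-star of order m. If there is an arc a = (u, v) ∈ A(D) such that |N⁺_D(u) \ {v}| ≥ m − 3, |N⁺_D(v) \ {u}| ≥ m − 3, and |(N⁺_D(u) ∪ N⁺_D(v)) \ {u, v}| ≥ m − 2, then D contains a subdigraph T isomorphic to T₁ whose center-arc is (u, v). -/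
/-- Lemma 4.3(i): let `D` be a finite loopless digraph, `m ≥ 4`, and let `T₁` be
an out-double-star `ODS(m; r, s)` of order `m` (two out-stars with `r` and `s`
leaves at their roots `u'`, `v'`, where `1 ≤ r, s` and `r + s = m − 2`, joined by
the center-arc `(u', v')`). If there is an arc `(u, v) ∈ A(D)` with
`|N⁺_D(u) \ {v}| ≥ m − 3`, `|N⁺_D(v) \ {u}| ≥ m − 3` and
`|(N⁺_D(u) ∪ N⁺_D(v)) \ {u, v}| ≥ m − 2`, then `D` contains a subdigraph
isomorphic to `T₁` with center-arc `(u, v)`: disjoint sets `Lu`, `Lv` of `r`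
out-neighbors of `u` and `s` out-neighbors of `v`, all distinct from `u`, `v`. -/
theorem exists_out_double_star {V : Type*} [Finite V]
    (D : V → V → Prop) (hloopless : Irreflexive D)
    (m r s : ℕ) (hm : 4 ≤ m) (hr : 1 ≤ r) (hs : 1 ≤ s) (hrs : r + s = m - 2)
    (u v : V) (huv : D u v)
    (h1 : m - 3 ≤ ({w | D u w} \ {v}).ncard)
    (h2 : m - 3 ≤ ({w | D v w} \ {u}).ncard)
    (h3 : m - 2 ≤ (({w | D u w} ∪ {w | D v w}) \ {u, v}).ncard) :
    ∃ Lu Lv : Set V, Lu.ncard = r ∧ Lv.ncard = s ∧ Disjoint Lu Lv ∧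
      u ∉ Lu ∪ Lv ∧ v ∉ Lu ∪ Lv ∧
      (∀ x ∈ Lu, D u x) ∧ (∀ x ∈ Lv, D v x) := by
  set A : Set V := {w | D u w} \ {u, v} with hAdef
  set B : Set V := {w | D v w} \ {u, v} with hBdef
  have hAeq : A = {w | D u w} \ {v} := by
    ext x
    simp only [hAdef, Set.mem_diff, Set.mem_setOf_eq, Set.mem_insert_iff,
      Set.mem_singleton_iff]
    constructor
    · rintro ⟨hx, hne⟩; exact ⟨hx, fun h => hne (Or.inr h)⟩
    · rintro ⟨hx, hne⟩
      refine ⟨hx, ?_⟩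
      rintro (rfl | rfl)
      · exact hloopless x hx
      · exact hne rfl
  have hBeq : B = {w | D v w} \ {u} := by
    ext x
    simp only [hBdef, Set.mem_diff, Set.mem_setOf_eq, Set.mem_insert_iff,
      Set.mem_singleton_iff]
    constructor
    · rintro ⟨hx, hne⟩; exact ⟨hx, fun h => hne (Or.inl h)⟩
    · rintro ⟨hx, hne⟩
      refine ⟨hx, ?_⟩
      rintro (rfl | rfl)
      · exact hne rfl
      · exact hloopless x hx
  have f1 : m - 3 ≤ A.ncard := hAeq ▸ h1
  have f2 : m - 3 ≤ B.ncard := hBeq ▸ h2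
  have hABeq : A ∪ B = ({w | D u w} ∪ {w | D v w}) \ {u, v} :=
    (Set.union_diff_distrib).symm
  have f3' : m - 2 ≤ (A ∪ B).ncard := hABeq ▸ h3
  have hsplit : (A ∪ B).ncard = A.ncard + (B \ A).ncard := by
    rw [← Set.union_diff_self,
      Set.ncard_union_eq Set.disjoint_sdiff_right (Set.toFinite _) (Set.toFinite _)]
  have f3 : m - 2 ≤ A.ncard + (B \ A).ncard := hsplit ▸ f3'
  have f4 : (B ∩ A).ncard + (B \ A).ncard = B.ncard :=
    Set.ncard_inter_add_ncard_diff_eq_ncard B A (Set.toFinite _)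
  set k : ℕ := min s (B \ A).ncard with hk
  obtain ⟨Lv1, hLv1sub, hLv1card⟩ :=
    Set.exists_subset_card_eq (min_le_right s (B \ A).ncard)
  have hneed1 : s - k ≤ (B ∩ A).ncard := by omega
  obtain ⟨Lv2, hLv2sub, hLv2card⟩ := Set.exists_subset_card_eq hneed1
  have hLv1A : Disjoint Lv1 A :=
    Set.disjoint_of_subset_left hLv1sub Set.disjoint_sdiff_left
  have hdis12 : Disjoint Lv1 Lv2 :=
    hLv1A.mono_right (hLv2sub.trans Set.inter_subset_right)
  set Lv : Set V := Lv1 ∪ Lv2 with hLvdef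
  have hLvB : Lv ⊆ B :=
    Set.union_subset (hLv1sub.trans Set.diff_subset)
      (hLv2sub.trans Set.inter_subset_left)
  have hLvcard : Lv.ncard = s := by
    rw [hLvdef, Set.ncard_union_eq hdis12 (Set.toFinite _) (Set.toFinite _),
      hLv1card, hLv2card]
    omega
  have hALv : A ∩ Lv ⊆ Lv2 := by
    rintro x ⟨hxA, hxLv⟩
    rcases hxLv with hx1 | hx2
    · exact absurd hxA (hLv1A.symm.ne_of_mem hxA hx1 rfl).elim
    · exact hx2
  have hALvcard : (A ∩ Lv).ncard ≤ s - k :=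
    hLv2card ▸ Set.ncard_le_ncard hALv (Set.toFinite _)
  have f5 : (A ∩ Lv).ncard + (A \ Lv).ncard = A.ncard :=
    Set.ncard_inter_add_ncard_diff_eq_ncard A Lv (Set.toFinite _)
  have hneed2 : r ≤ (A \ Lv).ncard := by omega
  obtain ⟨Lu, hLusub, hLucard⟩ := Set.exists_subset_card_eq hneed2
  have hLuA : Lu ⊆ A := hLusub.trans Set.diff_subset
  refine ⟨Lu, Lv, hLucard, hLvcard, ?_, ?_, ?_, ?_, ?_⟩
  · exact Set.disjoint_of_subset_left hLusub Set.disjoint_sdiff_left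
  · rintro (h | h)
    · exact (hLuA h).2 (Or.inl rfl)
    · exact (hLvB h).2 (Or.inl rfl)
  · rintro (h | h)
    · exact (hLuA h).2 (Or.inr rfl)
    · exact (hLvB h).2 (Or.inr rfl)
  · exact fun x hx => (hLuA hx).1
  · exact fun x hx => (hLvB hx).1
end

section
/- Let D be a finite digraph, let m ≥ 4 be an integer, and let T₂ be an in-double-star of order m. If there is an arc a = (u, v) ∈ A(D) such that |N⁻_D(u) \ {v}| ≥ m − 3, |N⁻_D(v) \ {u}| ≥ m − 3, and |(N⁻_D(u) ∪ N⁻_D(v)) \ {u, v}| ≥ m − 2, then D contains a subdigraph T isomorphic to T₂ whose center-arc is (u, v). -/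
/-- Lemma 4.3(ii): let `D` be a finite loopless digraph, `m ≥ 4`, and let `T₂` be
an in-double-star `IDS(m; r, s)` of order `m` (two in-stars with `r` and `s`
leaves at their roots `u'`, `v'`, where `1 ≤ r, s` and `r + s = m − 2`, joined by
the center-arc `(u', v')`). If there is an arc `(u, v) ∈ A(D)` with
`|N⁻_D(u) \ {v}| ≥ m − 3`, `|N⁻_D(v) \ {u}| ≥ m − 3` and
`|(N⁻_D(u) ∪ N⁻_D(v)) \ {u, v}| ≥ m − 2`, then `D` contains a subdigraph
isomorphic to `T₂` with center-arc `(u, v)`: disjoint sets `Lu`, `Lv` of `r`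
in-neighbors of `u` and `s` in-neighbors of `v`, all distinct from `u`, `v`. -/
theorem exists_in_double_star {V : Type*} [Finite V]
    (D : V → V → Prop) (hloopless : Irreflexive D)
    (m r s : ℕ) (hm : 4 ≤ m) (hr : 1 ≤ r) (hs : 1 ≤ s) (hrs : r + s = m - 2)
    (u v : V) (huv : D u v)
    (h1 : m - 3 ≤ ({w | D w u} \ {v}).ncard)
    (h2 : m - 3 ≤ ({w | D w v} \ {u}).ncard)
    (h3 : m - 2 ≤ (({w | D w u} ∪ {w | D w v}) \ {u, v}).ncard) :
    ∃ Lu Lv : Set V, Lu.ncard = r ∧ Lv.ncard = s ∧ Disjoint Lu Lv ∧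
      u ∉ Lu ∪ Lv ∧ v ∉ Lu ∪ Lv ∧
      (∀ x ∈ Lu, D x u) ∧ (∀ x ∈ Lv, D x v) := by
  set Au : Set V := {w | D w u} \ {u, v} with hAu
  set Av : Set V := {w | D w v} \ {u, v} with hAv
  have hAufin : Au.Finite := Set.toFinite _
  have hAvfin : Av.Finite := Set.toFinite _
  -- rewrite hypotheses
  have hAu' : ({w | D w u} \ {v}) = Au := by
    ext x
    simp only [hAu, Set.mem_diff, Set.mem_setOf_eq, Set.mem_singleton_iff,
      Set.mem_insert_iff]
    constructor
    · rintro ⟨hx, hxv⟩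
      refine ⟨hx, ?_⟩
      rintro (rfl | rfl)
      · exact hloopless x hx
      · exact hxv rfl
    · rintro ⟨hx, hxuv⟩
      exact ⟨hx, fun h => hxuv (Or.inr h)⟩
  have hAv' : ({w | D w v} \ {u}) = Av := by
    ext x
    simp only [hAv, Set.mem_diff, Set.mem_setOf_eq, Set.mem_singleton_iff,
      Set.mem_insert_iff]
    constructor
    · rintro ⟨hx, hxu⟩
      refine ⟨hx, ?_⟩
      rintro (rfl | rfl)
      · exact hxu rfl
      · exact hloopless x hx
    · rintro ⟨hx, hxuv⟩
      exact ⟨hx, fun h => hxuv (Or.inl h)⟩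
  have hUnion : (({w | D w u} ∪ {w | D w v}) \ {u, v}) = Au ∪ Av :=
    Set.union_diff_distrib
  rw [hAu'] at h1
  rw [hAv'] at h2
  rw [hUnion] at h3
  rw [← hrs] at h3
  have hsm : s ≤ m - 3 := by omega
  have hrm : r ≤ m - 3 := by omega
  -- case on whether Au \ Av has at least r elements
  by_cases hcase : r ≤ (Au \ Av).ncard
  · obtain ⟨Lu, hLusub, hLucard⟩ := Set.exists_subset_card_eq hcase
    obtain ⟨Lv, hLvsub, hLvcard⟩ := Set.exists_subset_card_eq (hsm.trans h2)
    refine ⟨Lu, Lv, hLucard, hLvcard, ?_, ?_, ?_, ?_, ?_⟩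
    · rw [Set.disjoint_left]
      intro x hxLu hxLv
      exact (hLusub hxLu).2 (hLvsub hxLv)
    · rintro (h | h)
      · exact (hLusub h).1.2 (Or.inl rfl)
      · exact (hLvsub h).2 (Or.inl rfl)
    · rintro (h | h)
      · exact (hLusub h).1.2 (Or.inr rfl)
      · exact (hLvsub h).2 (Or.inr rfl)
    · exact fun x hx => ((hLusub hx).1).1
    · exact fun x hx => (hLvsub hx).1
  · push_neg at hcase
    set S1 := Au \ Av with hS1
    have hS1sub : S1 ⊆ Au := Set.diff_subset
    have hAudecomp : Au = S1 ∪ (Au ∩ Av) := by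
      rw [hS1, Set.diff_union_inter]
    have hAucard : Au.ncard = S1.ncard + (Au ∩ Av).ncard := by
      have hdisj : Disjoint S1 (Au ∩ Av) := by
        rw [Set.disjoint_left]
        rintro x hxS1 hxI
        exact hxS1.2 hxI.2
      have h := Set.ncard_union_eq hdisj (Set.toFinite _) (Set.toFinite _)
      rw [← hAudecomp] at h
      exact h
    have hinter : r - S1.ncard ≤ (Au ∩ Av).ncard := by
      have hAur : r ≤ Au.ncard := hrm.trans h1
      omega
    obtain ⟨T, hTsub, hTcard⟩ := Set.exists_subset_card_eq hinter
    set Lu := S1 ∪ T with hLu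
    have hLudisj : Disjoint S1 T := by
      rw [Set.disjoint_left]
      intro x hxS1 hxT
      exact hxS1.2 (hTsub hxT).2
    have hLucard : Lu.ncard = r := by
      rw [hLu, Set.ncard_union_eq hLudisj (Set.toFinite _) (Set.toFinite _),
        hTcard]
      omega
    have hLusubAu : Lu ⊆ Au := Set.union_subset hS1sub
      (hTsub.trans Set.inter_subset_left)
    -- Av \ Lu has at least s elements
    have hAvLu : Av ∩ Lu = T := by
      apply Set.Subset.antisymm
      · rintro x ⟨hxAv, (hxS1 | hxT)⟩
        · exact absurd hxAv hxS1.2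
        · exact hxT
      · intro x hxT
        exact ⟨(hTsub hxT).2, Or.inr hxT⟩
    have hAvbig : s ≤ (Av \ Lu).ncard := by
      have hAuAv : (Au ∪ Av).ncard ≤ S1.ncard + Av.ncard := by
        have : Au ∪ Av = S1 ∪ Av := by
          rw [hS1, Set.diff_union_self]
        rw [this]
        exact Set.ncard_union_le _ _
      have : Av \ Lu = Av \ T := by
        apply Set.Subset.antisymm
        · exact Set.diff_subset_diff_right (Set.subset_union_right)
        · rintro x ⟨hxAv, hxT⟩
          refine ⟨hxAv, ?_⟩
          rintro (hxS1 | hxT')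
          · exact hxS1.2 hxAv
          · exact hxT hxT'
      rw [this, Set.ncard_diff (hTsub.trans Set.inter_subset_right)
        (Set.toFinite _), hTcard]
      omega
    obtain ⟨Lv, hLvsub, hLvcard⟩ := Set.exists_subset_card_eq hAvbig
    refine ⟨Lu, Lv, hLucard, hLvcard, ?_, ?_, ?_, ?_, ?_⟩
    · rw [Set.disjoint_right]
      intro x hxLv
      exact (hLvsub hxLv).2
    · rintro (h | h)
      · exact (hLusubAu h).2 (Or.inl rfl)
      · exact ((hLvsub h).1).2 (Or.inl rfl)
    · rintro (h | h)
      · exact (hLusubAu h).2 (Or.inr rfl)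
      · exact ((hLvsub h).1).2 (Or.inr rfl)
    · exact fun x hx => (hLusubAu hx).1
    · exact fun x hx => ((hLvsub hx).1).1
end

section
/- Let D be a finite digraph, let m ≥ 4 be an integer, and let T₃ be an out-in-double-star of order m. If there is an arc a = (u, v) ∈ A(D) such that |N⁺_D(u) \ {v}| ≥ m − 3, |N⁻_D(v) \ {u}| ≥ m − 3, and |(N⁺_D(u) ∪ N⁻_D(v)) \ {u, v}| ≥ m − 2, then D contains a subdigraph T isomorphic to T₃ whose center-arc is (u, v). -/
/-- Lemma 4.3(iii): let `D` be a finite loopless digraph, `m ≥ 4`, and let `T₃`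
be an out-in-double-star `OIDS(m; r, s)` of order `m` (an out-star with `r`
leaves at its root `u'` and an in-star with `s` leaves at its root `v'`, where
`1 ≤ r, s` and `r + s = m − 2`, joined by the center-arc `(u', v')`). If there is
an arc `(u, v) ∈ A(D)` with `|N⁺_D(u) \ {v}| ≥ m − 3`, `|N⁻_D(v) \ {u}| ≥ m − 3`
and `|(N⁺_D(u) ∪ N⁻_D(v)) \ {u, v}| ≥ m − 2`, then `D` contains a subdigraph
isomorphic to `T₃` with center-arc `(u, v)`: disjoint sets `Lu`, `Lv` of `r`
out-neighbors of `u` and `s` in-neighbors of `v`, all distinct from `u`, `v`. -/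
theorem exists_out_in_double_star {V : Type*} [Finite V]
    (D : V → V → Prop) (hloopless : Irreflexive D)
    (m r s : ℕ) (hm : 4 ≤ m) (hr : 1 ≤ r) (hs : 1 ≤ s) (hrs : r + s = m - 2)
    (u v : V) (huv : D u v)
    (h1 : m - 3 ≤ ({w | D u w} \ {v}).ncard)
    (h2 : m - 3 ≤ ({w | D w v} \ {u}).ncard)
    (h3 : m - 2 ≤ (({w | D u w} ∪ {w | D w v}) \ {u, v}).ncard) :
    ∃ Lu Lv : Set V, Lu.ncard = r ∧ Lv.ncard = s ∧ Disjoint Lu Lv ∧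
      u ∉ Lu ∪ Lv ∧ v ∉ Lu ∪ Lv ∧
      (∀ x ∈ Lu, D u x) ∧ (∀ x ∈ Lv, D x v) := by
  set A : Set V := {w | D u w} \ {u, v} with hA
  set B : Set V := {w | D w v} \ {u, v} with hB
  have hAeq : ({w | D u w} \ {v}) = A := by
    ext x
    simp only [hA, Set.mem_diff, Set.mem_setOf_eq, Set.mem_singleton_iff, Set.mem_insert_iff]
    constructor
    · rintro ⟨hx, hxv⟩
      refine ⟨hx, ?_⟩
      rintro (rfl | rfl)
      · exact hloopless _ hx
      · exact hxv rfl
    · rintro ⟨hx, hxuv⟩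
      exact ⟨hx, fun h => hxuv (Or.inr h)⟩
  have hBeq : ({w | D w v} \ {u}) = B := by
    ext x
    simp only [hB, Set.mem_diff, Set.mem_setOf_eq, Set.mem_singleton_iff, Set.mem_insert_iff]
    constructor
    · rintro ⟨hx, hxu⟩
      refine ⟨hx, ?_⟩
      rintro (rfl | rfl)
      · exact hxu rfl
      · exact hloopless _ hx
    · rintro ⟨hx, hxuv⟩
      exact ⟨hx, fun h => hxuv (Or.inl h)⟩
  have hUeq : (({w | D u w} ∪ {w | D w v}) \ {u, v}) = A ∪ B := by
    rw [hA, hB, Set.union_diff_distrib]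
  rw [hAeq] at h1
  rw [hBeq] at h2
  rw [hUeq] at h3
  -- arithmetic
  have hm3 : m - 3 = r + s - 1 := by omega
  have hm2 : m - 2 = r + s := by omega
  rw [hm3] at h1 h2
  rw [hm2] at h3
  have hAfin : A.Finite := Set.toFinite _
  have hBfin : B.Finite := Set.toFinite _
  have hkey : (A \ B).ncard + B.ncard = (A ∪ B).ncard :=
    Set.ncard_diff_add_ncard A B
  by_cases hcase : r ≤ (A \ B).ncard
  · obtain ⟨Lu, hLuA, hLu⟩ := Set.exists_subset_card_eq hcase
    have hsB : s ≤ B.ncard := by omega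
    obtain ⟨Lv, hLvB, hLv⟩ := Set.exists_subset_card_eq hsB
    refine ⟨Lu, Lv, hLu, hLv, ?_, ?_, ?_, ?_, ?_⟩
    · exact Set.disjoint_of_subset hLuA hLvB Set.disjoint_sdiff_left
    · rintro (h | h)
      · exact (hLuA h).1.2 (Or.inl rfl)
      · exact (hLvB h).2 (Or.inl rfl)
    · rintro (h | h)
      · exact (hLuA h).1.2 (Or.inr rfl)
      · exact (hLvB h).2 (Or.inr rfl)
    · exact fun x hx => ((hLuA hx).1).1
    · exact fun x hx => (hLvB hx).1
  · push_neg at hcase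
    have hABcard : (A ∩ B).ncard + (A \ B).ncard = A.ncard :=
      Set.ncard_inter_add_ncard_diff_eq_ncard A B
    have hk : r - (A \ B).ncard ≤ (A ∩ B).ncard := by omega
    obtain ⟨X, hXAB, hX⟩ := Set.exists_subset_card_eq hk
    have hXfin : X.Finite := Set.toFinite _
    have hdisj : Disjoint (A \ B) X :=
      Set.disjoint_of_subset_right hXAB
        (Set.disjoint_of_subset_right Set.inter_subset_right Set.disjoint_sdiff_left)
    have hLucard : ((A \ B) ∪ X).ncard = r := by
      rw [Set.ncard_union_eq hdisj hAfin.diff hXfin, hX]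
      omega
    have hXB : X ⊆ B := hXAB.trans Set.inter_subset_right
    have hBX : (B \ X).ncard = B.ncard - X.ncard := Set.ncard_diff hXB
    have hsBX : s ≤ (B \ X).ncard := by omega
    obtain ⟨Lv, hLvB, hLv⟩ := Set.exists_subset_card_eq hsBX
    refine ⟨(A \ B) ∪ X, Lv, hLucard, hLv, ?_, ?_, ?_, ?_, ?_⟩
    · refine Set.disjoint_union_left.2 ⟨?_, ?_⟩
      · exact Set.disjoint_of_subset_right (hLvB.trans Set.diff_subset)
          Set.disjoint_sdiff_left
      · exact Set.disjoint_of_subset_right hLvB Set.disjoint_sdiff_right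
    · rintro ((h | h) | h)
      · exact h.1.2 (Or.inl rfl)
      · exact (hXAB h).1.2 (Or.inl rfl)
      · exact ((hLvB h).1).2 (Or.inl rfl)
    · rintro ((h | h) | h)
      · exact h.1.2 (Or.inr rfl)
      · exact (hXAB h).1.2 (Or.inr rfl)
      · exact ((hLvB h).1).2 (Or.inr rfl)
    · rintro x (h | h)
      · exact h.1.1
      · exact (hXAB h).1.1
    · exact fun x hx => ((hLvB hx).1).1
end
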